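/- Define the potential Φ by Φ(⟨⟩) = 0 and Φ(⟨t,a,u⟩) = Φ(t) + p(t,u) + Φ(u), where p(t,u) = log_β(β·s(u)/(s(t)+s(u))), β = φ^(φ+2), and φ = (√5+1)/2 is the golden ratio. For every k ≥ 2, with V_k = T_k ∪ U_k under the rank-biased merge and W_k = ⟨T_k, 0, U_k⟩: Φ(V_k) − Φ(W_k) = −1 + log_β( (2^(k+2) − 6)·(2^(k+1) − 4) / ((2^(k+2) − 7)·(2^(k+1) − 1)) ). -/
import Mathlib


inductive BTree (α : Type) : Type
  | nil : BTree α
  | node : BTree α → α → BTree α → BTree α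

namespace BTree

variable {α : Type} [LinearOrder α]

/-- number of nodes -/
def size : BTree α → ℕ
  | nil => 0
  | node t _ u => size t + size u + 1

/-- size plus one -/
def s (x : BTree α) : ℕ := size x + 1

def rank : BTree α → ℕ
  | nil => 0
  | node _ _ u => rank u + 1

/-- minor rank -/
def prank : BTree α → ℕ
  | nil => 0
  | node t _ _ => rank t + 1

/-- `a` is less than or equal to every label of the tree -/
def LeAll (a : α) : BTree α → Prop
  | nil => True
  | node t b u => a ≤ b ∧ LeAll a t ∧ LeAll a u

/-- heap property: every node's label is ≤ all labels in its subtrees -/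
def IsHeap : BTree α → Prop
  | nil => True
  | node t a u => LeAll a t ∧ LeAll a u ∧ IsHeap t ∧ IsHeap u

/-- rank-biased leftist property -/
def RankLeftist : BTree α → Prop
  | nil => True
  | node t _ u => rank u ≤ rank t ∧ RankLeftist t ∧ RankLeftist u

/-- weight-biased leftist property -/
def WeightLeftist : BTree α → Prop
  | nil => True
  | node t _ u => size u ≤ size t ∧ WeightLeftist t ∧ WeightLeftist u

/-- rank-biased balancing -/
def balR : BTree α → BTree α
  | nil => nil
  | node t a u => if rank u < rank t then node t a u else node u a t

/-- weight-biased balancing -/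
def balW : BTree α → BTree α
  | nil => nil
  | node t a u => if size u < size t then node t a u else node u a t

/-- rank-biased merge -/
def mergeR : BTree α → BTree α → BTree α
  | nil, nil => nil
  | nil, node v b w => balR (node v b (mergeR nil w))
  | node t a u, nil => balR (node t a (mergeR u nil))
  | node t a u, node v b w =>
      if a ≤ b then balR (node t a (mergeR u (node v b w)))
      else balR (node v b (mergeR (node t a u) w))
termination_by x y => rank x + rank y
decreasing_by all_goals simp [rank]

/-- weight-biased merge -/
def mergeW : BTree α → BTree α → BTree α
  | nil, nil => nil
  | nil, node v b w => balW (node v b (mergeW nil w))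
  | node t a u, nil => balW (node t a (mergeW u nil))
  | node t a u, node v b w =>
      if a ≤ b then balW (node t a (mergeW u (node v b w)))
      else balW (node v b (mergeW (node t a u) w))
termination_by x y => rank x + rank y
decreasing_by all_goals simp [rank]

/-- number of comparisons used when merging (independent of the balancing strategy) -/
def cost : BTree α → BTree α → ℕ
  | nil, nil => 0
  | nil, node _ _ w => cost nil w + 1
  | node _ _ u, nil => cost u nil + 1
  | node t a u, node v b w =>
      (if a ≤ b then cost u (node v b w) else cost (node t a u) w) + 1
termination_by x y => rank x + rank y
decreasing_by all_goals simp [rank]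

end BTree

/-- the golden ratio φ = (√5 + 1)/2 -/
noncomputable def goldPhi : ℝ := (Real.sqrt 5 + 1) / 2

/-- β = φ^(φ+2) -/
noncomputable def goldBeta : ℝ := goldPhi ^ (goldPhi + 2)

/-- α = φ^(2φ-1) -/
noncomputable def goldAlpha : ℝ := goldPhi ^ (2 * goldPhi - 1)

namespace BTree

variable {α : Type} [LinearOrder α]

/-- p(t,u) = log_β (β·s(u)/(s(t)+s(u))) (without taking the max with 0) -/
noncomputable def p (t u : BTree α) : ℝ :=
  Real.logb goldBeta (goldBeta * (s u : ℝ) / ((s t : ℝ) + (s u : ℝ)))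

/-- the potential function Φ(⟨⟩) = 0, Φ(⟨t,a,u⟩) = Φ(t) + p(t,u) + Φ(u) -/
noncomputable def Phi : BTree α → ℝ
  | nil => 0
  | node t _ u => Phi t + p t u + Phi u

end BTree

namespace BTree

/-- B_k^a : the perfect binary tree of height k with all labels a -/
def perfect : ℕ → ℕ → BTree ℕ
  | 0, _ => nil
  | k + 1, a => node (perfect k a) a (perfect k a)

/-- the trees T_k for k ≥ 2 (junk values below 2):
    T_2 = ⟨⟨0⟩,0,⟨2⟩⟩ and T_k = ⟨B_k^0, 0, T_{k-1}⟩ for k ≥ 3 -/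
def Tk : ℕ → BTree ℕ
  | 0 => nil
  | 1 => nil
  | 2 => node (node nil 0 nil) 0 (node nil 2 nil)
  | k + 3 => node (perfect (k + 3) 0) 0 (Tk (k + 2))

/-- the trees U_k for k ≥ 2 (junk values below 2):
    U_2 = ⟨B_2^1,1,⟨1⟩⟩ and U_k = ⟨B_k^1, 1, U_{k-1}⟩ for k ≥ 3 -/
def Uk : ℕ → BTree ℕ
  | 0 => nil
  | 1 => nil
  | 2 => node (perfect 2 1) 1 (node nil 1 nil)
  | k + 3 => node (perfect (k + 3) 1) 1 (Uk (k + 2))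

/-- the trees W_k = ⟨T_k, 0, U_k⟩ -/
def Wk (k : ℕ) : BTree ℕ := node (Tk k) 0 (Uk k)

end BTree


section Aux

namespace BTree

variable {α : Type} [LinearOrder α]

lemma s_nil : s (nil : BTree α) = 1 := rfl

lemma s_node (t u : BTree α) (a : α) : s (node t a u) = s t + s u := by
  simp [s, size]; omega

lemma s_pos (x : BTree α) : 0 < s x := Nat.succ_pos _

/-- the product of ratios appearing in Φ -/
noncomputable def q : BTree α → ℝ
  | nil => 1
  | node t _ u => q t * ((s u : ℝ) / ((s t : ℝ) + (s u : ℝ))) * q u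

lemma q_pos : ∀ x : BTree α, 0 < q x
  | nil => one_pos
  | node t _ u => by
    have ht := q_pos t
    have hu := q_pos u
    have h1 : (0:ℝ) < (s t : ℝ) := by exact_mod_cast s_pos t
    have h2 : (0:ℝ) < (s u : ℝ) := by exact_mod_cast s_pos u
    rw [q]
    positivity

lemma q_node_mul (t u : BTree α) (a : α) :
    q (node t a u) * ((s t : ℝ) + (s u : ℝ)) = q t * (s u : ℝ) * q u := by
  have h1 : (0:ℝ) < (s t : ℝ) := by exact_mod_cast s_pos t
  have h2 : (0:ℝ) < (s u : ℝ) := by exact_mod_cast s_pos u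
  rw [q]
  field_simp

lemma one_lt_goldPhi : 1 < goldPhi := by
  have h5 : Real.sqrt 5 ^ 2 = 5 := Real.sq_sqrt (by norm_num)
  have := Real.sqrt_nonneg 5
  unfold goldPhi
  nlinarith

lemma one_lt_goldBeta : 1 < goldBeta := by
  rw [goldBeta, Real.one_lt_rpow_iff_of_pos (by linarith [one_lt_goldPhi])]
  exact Or.inl ⟨one_lt_goldPhi, by linarith [one_lt_goldPhi]⟩

lemma goldBeta_pos : 0 < goldBeta := lt_trans one_pos one_lt_goldBeta

lemma Phi_eq : ∀ x : BTree α, Phi x = (size x : ℝ) + Real.logb goldBeta (q x)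
  | nil => by simp [Phi, q, size]
  | node t a u => by
    have ht := Phi_eq t
    have hu := Phi_eq u
    have h1 : (0:ℝ) < (s t : ℝ) := by exact_mod_cast s_pos t
    have h2 : (0:ℝ) < (s u : ℝ) := by exact_mod_cast s_pos u
    have hr : (0:ℝ) < (s u : ℝ) / ((s t : ℝ) + (s u : ℝ)) := div_pos h2 (by linarith)
    have hp : p t u = 1 + Real.logb goldBeta ((s u : ℝ) / ((s t : ℝ) + (s u : ℝ))) := by
      rw [p, mul_div_assoc, Real.logb_mul (ne_of_gt goldBeta_pos) (ne_of_gt hr),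
        Real.logb_self_eq_one one_lt_goldBeta]
    have hq : Real.logb goldBeta (q (node t a u))
        = Real.logb goldBeta (q t) + Real.logb goldBeta ((s u : ℝ) / ((s t : ℝ) + (s u : ℝ)))
          + Real.logb goldBeta (q u) := by
      rw [q, Real.logb_mul (ne_of_gt (mul_pos (q_pos t) hr)) (ne_of_gt (q_pos u)),
        Real.logb_mul (ne_of_gt (q_pos t)) (ne_of_gt hr)]
    rw [show Phi (node t a u) = Phi t + p t u + Phi u from rfl, ht, hu, hp, hq,
      show size (node t a u) = size t + size u + 1 from rfl]
    push_cast
    ring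

/-! ### The merge result trees -/

def Mk : ℕ → BTree ℕ
  | 0 => nil
  | 1 => nil
  | 2 => node (perfect 2 1) 1 (node (node nil 2 nil) 1 nil)
  | k + 3 => node (perfect (k + 3) 1) 1 (Mk (k + 2))

def Nk (m : ℕ) : ℕ → BTree ℕ
  | 0 => nil
  | 1 => nil
  | 2 => node (Mk m) 0 (node nil 0 nil)
  | j + 3 => node (perfect (j + 3) 0) 0 (Nk m (j + 2))

lemma rank_perfect : ∀ n a, rank (perfect n a) = n
  | 0, _ => rfl
  | n + 1, a => by rw [perfect, rank, rank_perfect n a]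

lemma rank_Mk : ∀ n, rank (Mk (n + 2)) = n + 2
  | 0 => rfl
  | n + 1 => by
    show rank (node (perfect (n + 3) 1) 1 (Mk (n + 2))) = n + 3
    rw [rank, rank_Mk n]

lemma rank_Nk (m : ℕ) : ∀ n, rank (Nk m (n + 2)) = n + 2
  | 0 => rfl
  | n + 1 => by
    show rank (node (perfect (n + 3) 0) 0 (Nk m (n + 2))) = n + 3
    rw [rank, rank_Nk m n]

lemma mergeR_two_Uk : ∀ n, mergeR (node nil 2 nil) (Uk (n + 2)) = Mk (n + 2)
  | 0 => by simp [Uk, mergeR, balR, rank, perfect, Mk]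
  | n + 1 => by
    have ih := mergeR_two_Uk n
    show mergeR (node nil 2 nil) (node (perfect (n + 3) 1) 1 (Uk (n + 2))) = Mk (n + 3)
    rw [mergeR]
    rw [if_neg (by norm_num), ih]
    rw [balR, if_pos (by simp [rank_Mk, rank_perfect])]
    rfl

lemma Uk_shape : ∀ m, ∃ t u, Uk (m + 2) = node t 1 u
  | 0 => ⟨_, _, rfl⟩
  | m + 1 => ⟨_, _, rfl⟩

lemma mergeR_Tk_Uk (m : ℕ) : ∀ n, mergeR (Tk (n + 2)) (Uk (m + 2)) = Nk (m + 2) (n + 2)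
  | 0 => by
    obtain ⟨t, u, hu⟩ := Uk_shape m
    show mergeR (node (node nil 0 nil) 0 (node nil 2 nil)) (Uk (m + 2)) = _
    rw [hu, mergeR, if_pos (by norm_num), ← hu, mergeR_two_Uk m]
    rw [balR, if_neg (by simp [rank_Mk, rank])]
    rfl
  | n + 1 => by
    have ih := mergeR_Tk_Uk m n
    obtain ⟨t, u, hu⟩ := Uk_shape m
    show mergeR (node (perfect (n + 3) 0) 0 (Tk (n + 2))) (Uk (m + 2)) = Nk (m + 2) (n + 3)
    rw [hu, mergeR, if_pos (by norm_num), ← hu, ih]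
    rw [balR, if_pos (by simp [rank_Nk, rank_perfect])]
    rfl

/-! ### size computations -/

lemma s_perfect : ∀ n a, s (perfect n a) = 2 ^ n
  | 0, _ => rfl
  | n + 1, a => by
    rw [perfect, s_node, s_perfect n a, pow_succ]; ring

lemma s_Tk : ∀ n, s (Tk (n + 2)) + 4 = 2 ^ (n + 3)
  | 0 => rfl
  | n + 1 => by
    show s (node (perfect (n + 3) 0) 0 (Tk (n + 2))) + 4 = 2 ^ (n + 4)
    rw [s_node, s_perfect]
    have := s_Tk n
    have : (2:ℕ) ^ (n + 4) = 2 ^ (n + 3) + 2 ^ (n + 3) := by rw [pow_succ]; ring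
    omega

lemma s_Uk : ∀ n, s (Uk (n + 2)) + 2 = 2 ^ (n + 3)
  | 0 => rfl
  | n + 1 => by
    show s (node (perfect (n + 3) 1) 1 (Uk (n + 2))) + 2 = 2 ^ (n + 4)
    rw [s_node, s_perfect]
    have := s_Uk n
    have : (2:ℕ) ^ (n + 4) = 2 ^ (n + 3) + 2 ^ (n + 3) := by rw [pow_succ]; ring
    omega

lemma s_Mk : ∀ n, s (Mk (n + 2)) + 1 = 2 ^ (n + 3)
  | 0 => rfl
  | n + 1 => by
    show s (node (perfect (n + 3) 1) 1 (Mk (n + 2))) + 1 = 2 ^ (n + 4)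
    rw [s_node, s_perfect]
    have := s_Mk n
    have : (2:ℕ) ^ (n + 4) = 2 ^ (n + 3) + 2 ^ (n + 3) := by rw [pow_succ]; ring
    omega

lemma s_Nk (m : ℕ) : ∀ n, s (Nk (m + 2) (n + 2)) + 7 = 2 ^ (m + 3) + 2 ^ (n + 3)
  | 0 => by
    show s (node (Mk (m + 2)) 0 (node nil 0 nil)) + 7 = 2 ^ (m + 3) + 8
    rw [s_node]
    have := s_Mk m
    have h2 : s (node (nil : BTree ℕ) 0 nil) = 2 := rfl
    omega
  | n + 1 => by
    show s (node (perfect (n + 3) 0) 0 (Nk (m + 2) (n + 2))) + 7 = 2 ^ (m + 3) + 2 ^ (n + 4)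
    rw [s_node, s_perfect]
    have := s_Nk m n
    have : (2:ℕ) ^ (n + 4) = 2 ^ (n + 3) + 2 ^ (n + 3) := by rw [pow_succ]; ring
    omega

/-! ### q computations -/

lemma q_perfect_label : ∀ n a, q (perfect n a) = q (perfect n 0)
  | 0, _ => rfl
  | n + 1, a => by
    rw [perfect, perfect, q, q, q_perfect_label n a, s_perfect, s_perfect]

noncomputable def QB2 : ℕ → ℝ
  | 0 => 1
  | n + 1 => q (perfect (n + 3) 0) * QB2 n

lemma QB2_pos : ∀ n, 0 < QB2 n
  | 0 => one_pos
  | n + 1 => mul_pos (q_pos _) (QB2_pos n)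

lemma cast_s_Tk (n : ℕ) : (s (Tk (n + 2)) : ℝ) = 2 ^ (n + 3) - 4 := by
  have := s_Tk n
  have : ((s (Tk (n + 2)) + 4 : ℕ) : ℝ) = ((2 ^ (n + 3) : ℕ) : ℝ) := by exact_mod_cast this
  push_cast at this
  linarith

lemma cast_s_Uk (n : ℕ) : (s (Uk (n + 2)) : ℝ) = 2 ^ (n + 3) - 2 := by
  have := s_Uk n
  have : ((s (Uk (n + 2)) + 2 : ℕ) : ℝ) = ((2 ^ (n + 3) : ℕ) : ℝ) := by exact_mod_cast this
  push_cast at this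
  linarith

lemma cast_s_Mk (n : ℕ) : (s (Mk (n + 2)) : ℝ) = 2 ^ (n + 3) - 1 := by
  have := s_Mk n
  have : ((s (Mk (n + 2)) + 1 : ℕ) : ℝ) = ((2 ^ (n + 3) : ℕ) : ℝ) := by exact_mod_cast this
  push_cast at this
  linarith

lemma cast_s_Nk (m n : ℕ) : (s (Nk (m + 2) (n + 2)) : ℝ) = 2 ^ (m + 3) + 2 ^ (n + 3) - 7 := by
  have := s_Nk m n
  have : ((s (Nk (m + 2) (n + 2)) + 7 : ℕ) : ℝ) = ((2 ^ (m + 3) + 2 ^ (n + 3) : ℕ) : ℝ) := by exact_mod_cast this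
  push_cast at this
  linarith

lemma cast_s_perfect (n a : ℕ) : (s (perfect n a) : ℝ) = 2 ^ n := by
  rw [s_perfect]; push_cast; ring

lemma qT : ∀ n, q (Tk (n + 2)) * (2 ^ (n + 3) - 4) = QB2 n * (1 / 2)
  | 0 => by norm_num [Tk, QB2, q, s, size]
  | n + 1 => by
    have ih := qT n
    have h := q_node_mul (perfect (n + 3) 0) (Tk (n + 2)) 0
    rw [cast_s_perfect, cast_s_Tk] at h
    show q (node (perfect (n + 3) 0) 0 (Tk (n + 2))) * (2 ^ (n + 4) - 4)
        = q (perfect (n + 3) 0) * QB2 n * (1 / 2)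
    linear_combination h + q (perfect (n + 3) 0) * ih

lemma qU : ∀ n, q (Uk (n + 2)) * (2 ^ (n + 3) - 2) = QB2 n * q (perfect 2 1)
  | 0 => by
    have h := q_node_mul (perfect 2 1) (node nil 1 nil) 1
    rw [cast_s_perfect] at h
    have h2 : (s (node (nil : BTree ℕ) 1 nil) : ℝ) = 2 := rfl
    rw [h2] at h
    have h3 : q (node (nil : BTree ℕ) 1 nil) = 1 / 2 := by norm_num [q, s, size]
    rw [h3] at h
    show q (node (perfect 2 1) 1 (node nil 1 nil)) * (2 ^ 3 - 2) = 1 * q (perfect 2 1)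
    linear_combination h
  | n + 1 => by
    have ih := qU n
    have h := q_node_mul (perfect (n + 3) 1) (Uk (n + 2)) 1
    rw [cast_s_perfect, cast_s_Uk, q_perfect_label (n + 3) 1] at h
    show q (node (perfect (n + 3) 1) 1 (Uk (n + 2))) * (2 ^ (n + 4) - 2)
        = q (perfect (n + 3) 0) * QB2 n * q (perfect 2 1)
    linear_combination h + q (perfect (n + 3) 0) * ih

lemma qM : ∀ n, q (Mk (n + 2)) * (2 ^ (n + 3) - 1) = QB2 n * q (perfect 2 1) * (1 / 2)
  | 0 => by
    have h := q_node_mul (perfect 2 1) (node (node nil 2 nil) 1 nil) 1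
    rw [cast_s_perfect] at h
    have h2 : (s (node (node (nil : BTree ℕ) 2 nil) 1 nil) : ℝ) = 3 := rfl
    rw [h2] at h
    have h3 : q (node (node (nil : BTree ℕ) 2 nil) 1 nil) = 1 / 6 := by
      norm_num [q, s, size]
    rw [h3] at h
    show q (node (perfect 2 1) 1 (node (node nil 2 nil) 1 nil)) * (2 ^ 3 - 1)
        = 1 * q (perfect 2 1) * (1 / 2)
    linear_combination h
  | n + 1 => by
    have ih := qM n
    have h := q_node_mul (perfect (n + 3) 1) (Mk (n + 2)) 1
    rw [cast_s_perfect, cast_s_Mk] at h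
    show q (node (perfect (n + 3) 1) 1 (Mk (n + 2))) * (2 ^ (n + 4) - 1)
        = q (perfect (n + 3) 0) * QB2 n * q (perfect 2 1) * (1 / 2)
    rw [show q (perfect (n+3) 1) = q (perfect (n+3) 0) from q_perfect_label (n+3) 1] at h
    linear_combination h + q (perfect (n + 3) 0) * ih

lemma qN (m : ℕ) : ∀ n,
    q (Nk (m + 2) (n + 2)) * (2 ^ (m + 3) + 2 ^ (n + 3) - 7) = QB2 n * q (Mk (m + 2))
  | 0 => by
    have h := q_node_mul (Mk (m + 2)) (node nil 0 nil) 0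
    rw [cast_s_Mk] at h
    have h2 : (s (node (nil : BTree ℕ) 0 nil) : ℝ) = 2 := rfl
    rw [h2] at h
    have h3 : q (node (nil : BTree ℕ) 0 nil) = 1 / 2 := by norm_num [q, s, size]
    rw [h3] at h
    show q (node (Mk (m + 2)) 0 (node nil 0 nil)) * (2 ^ (m + 3) + 2 ^ 3 - 7)
        = 1 * q (Mk (m + 2))
    linear_combination h
  | n + 1 => by
    have ih := qN m n
    have h := q_node_mul (perfect (n + 3) 0) (Nk (m + 2) (n + 2)) 0
    rw [cast_s_perfect, cast_s_Nk] at h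
    show q (node (perfect (n + 3) 0) 0 (Nk (m + 2) (n + 2))) * (2 ^ (m + 3) + 2 ^ (n + 4) - 7)
        = q (perfect (n + 3) 0) * QB2 n * q (Mk (m + 2))
    linear_combination h + q (perfect (n + 3) 0) * ih

end BTree

end Aux

/- For every k ≥ 2, with V_k = T_k ∪ U_k (rank-biased merge):
Φ(V_k) − Φ(W_k) = −1 + log_β((2^(k+2) − 6)(2^(k+1) − 4)/((2^(k+2) − 7)(2^(k+1) − 1))). -/
open BTree in
theorem Phi_Vk_sub_Phi_Wk (k : ℕ) (hk : 2 ≤ k) :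
    Phi (mergeR (Tk k) (Uk k)) - Phi (Wk k)
      = -1 + Real.logb goldBeta
          ((((2 : ℝ) ^ (k + 2) - 6) * ((2 : ℝ) ^ (k + 1) - 4)) /
           (((2 : ℝ) ^ (k + 2) - 7) * ((2 : ℝ) ^ (k + 1) - 1))) := by
  obtain ⟨n, rfl⟩ : ∃ n, k = n + 2 := ⟨k - 2, by omega⟩
  have hpow : (8:ℝ) ≤ 2 ^ (n + 3) := by
    calc (8:ℝ) = 2 ^ 3 := by norm_num
    _ ≤ 2 ^ (n + 3) := by apply pow_le_pow_right₀ (by norm_num); omega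
  have hA := QB2_pos n
  have hB := q_pos (perfect 2 1)
  have hT := qT n
  have hU := qU n
  have hM := qM n
  have hN := qN n n
  have hWk : Wk (n + 2) = node (Tk (n + 2)) 0 (Uk (n + 2)) := rfl
  have hW := q_node_mul (Tk (n + 2)) (Uk (n + 2)) (0 : ℕ)
  rw [cast_s_Tk, cast_s_Uk, ← hWk] at hW
  have HV : q (Nk (n + 2) (n + 2))
      * (2 * ((2:ℝ) ^ (n + 3) - 1) * (2 * 2 ^ (n + 3) - 7))
      = QB2 n * QB2 n * q (perfect 2 1) := by
    linear_combination (2 * ((2:ℝ) ^ (n + 3) - 1)) * hN + 2 * QB2 n * hM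
  have HW : q (Wk (n + 2))
      * (2 * ((2:ℝ) ^ (n + 3) - 4) * (2 * 2 ^ (n + 3) - 6))
      = QB2 n * QB2 n * q (perfect 2 1) := by
    linear_combination (2 * ((2:ℝ) ^ (n + 3) - 4)) * hW
      + (2 * ((2:ℝ) ^ (n + 3) - 2) * q (Uk (n + 2))) * hT + QB2 n * hU
  have hVW : q (Nk (n + 2) (n + 2)) / q (Wk (n + 2))
      = ((2 * (2:ℝ) ^ (n + 3) - 6) * ((2:ℝ) ^ (n + 3) - 4)) /
        ((2 * (2:ℝ) ^ (n + 3) - 7) * ((2:ℝ) ^ (n + 3) - 1)) := by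
    rw [div_eq_div_iff (ne_of_gt (q_pos _)) (by nlinarith)]
    linear_combination (1/2 : ℝ) * HV - (1/2 : ℝ) * HW
  rw [mergeR_Tk_Uk n n, Phi_eq, Phi_eq]
  have hsize : ∀ x : BTree ℕ, (size x : ℝ) = (s x : ℝ) - 1 := by
    intro x; rw [s]; push_cast; ring
  have hsV : (size (Nk (n + 2) (n + 2)) : ℝ) = 2 * 2 ^ (n + 3) - 8 := by
    rw [hsize, cast_s_Nk]; ring
  have hsW : (size (Wk (n + 2)) : ℝ) = 2 * 2 ^ (n + 3) - 7 := by
    rw [hsize, hWk, show (s (node (Tk (n+2)) 0 (Uk (n+2))) : ℝ)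
      = (s (Tk (n+2)) : ℝ) + (s (Uk (n+2)) : ℝ) by rw [s_node]; push_cast; ring,
      cast_s_Tk, cast_s_Uk]
    ring
  have egoal : (((2 : ℝ) ^ (n + 2 + 2) - 6) * ((2 : ℝ) ^ (n + 2 + 1) - 4)) /
           (((2 : ℝ) ^ (n + 2 + 2) - 7) * ((2 : ℝ) ^ (n + 2 + 1) - 1))
      = ((2 * (2:ℝ) ^ (n + 3) - 6) * ((2:ℝ) ^ (n + 3) - 4)) /
        ((2 * (2:ℝ) ^ (n + 3) - 7) * ((2:ℝ) ^ (n + 3) - 1)) := by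
    norm_num [pow_succ]
    ring_nf
  rw [hsV, hsW, egoal]
  have hlog : Real.logb goldBeta (q (Nk (n + 2) (n + 2)))
        - Real.logb goldBeta (q (Wk (n + 2)))
      = Real.logb goldBeta (((2 * (2:ℝ) ^ (n + 3) - 6) * ((2:ℝ) ^ (n + 3) - 4)) /
        ((2 * (2:ℝ) ^ (n + 3) - 7) * ((2:ℝ) ^ (n + 3) - 1))) := by
    rw [← Real.logb_div (ne_of_gt (q_pos _)) (ne_of_gt (q_pos _)), hVW]
  linarith [hlog]
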